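/- arXiv:2509.21809 — 3 statements merged into one kernel-verified Lean document; each statement's English description precedes it below -/
import Mathlib

section
/- Let f be a real number and let g be the 3×3 real matrix with rows (0,0,1), (0,1,0), (1,0,f). A 3×3 real matrix φ satisfies φᵀ·g = −g·φ if and only if there exist real numbers a₁, a₂, b₁ such that φ is the matrix with rows (a₁, b₁, f·a₁), (a₂, 0, −b₁ + f·a₂), (0, −a₂, −a₁). (This is the normal form (3.8), established in the proof of Theorem 3.1, of an endomorphism that is g-skew-adjoint with respect to the 3-dimensional Walker metric with ε = 1.) -/
/-!
Since `g` is symmetric, `φᵀ g = (g φ)ᵀ`, so `φ` is `g`-skew-adjoint exactly when `g φ` is a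
skew-symmetric matrix. The Walker matrix `g` is invertible (`det g = -1`), and `g` maps the
three-parameter normal form onto the three-parameter family of skew-symmetric `3 × 3` matrices.
-/

open Matrix

namespace Matrix

theorem transpose_mul_eq_neg_mul_iff {n R : Type*} [Fintype n] [CommRing R]
    {g φ : Matrix n n R} (hg : g.IsSymm) :
    φᵀ * g = -(g * φ) ↔ (g * φ)ᵀ = -(g * φ) := by
  rw [transpose_mul, hg.eq]

theorem transpose_eq_neg_iff_fin_three {R : Type*} [Ring R] [IsAddTorsionFree R]
    (S : Matrix (Fin 3) (Fin 3) R) :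
    Sᵀ = -S ↔ ∃ x y z : R, S = !![0, x, y; -x, 0, z; -y, -z, 0] := by
  constructor
  · intro h
    have hS (i j : Fin 3) : S j i = -S i j := congrFun (congrFun h i) j
    have hdiag (i : Fin 3) : S i i = 0 := self_eq_neg.mp (hS i i)
    refine ⟨S 0 1, S 0 2, S 1 2, ?_⟩
    conv_lhs => rw [eta_fin_three S]
    rw [hS 0 1, hS 0 2, hS 1 2, hdiag 0, hdiag 1, hdiag 2]
  · rintro ⟨x, y, z, rfl⟩
    ext i j
    fin_cases i <;> fin_cases j <;> simp

end Matrix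

section Walker

variable {R : Type*} [CommRing R]

def walkerMatrix (f : R) : Matrix (Fin 3) (Fin 3) R :=
  !![0, 0, 1; 0, 1, 0; 1, 0, f]

def walkerSkewNormalForm (f a₁ a₂ b₁ : R) : Matrix (Fin 3) (Fin 3) R :=
  !![a₁, b₁, f * a₁; a₂, 0, -b₁ + f * a₂; 0, -a₂, -a₁]

theorem walkerMatrix_isSymm (f : R) : (walkerMatrix f).IsSymm := by
  ext i j
  fin_cases i <;> fin_cases j <;> rfl

theorem det_walkerMatrix (f : R) : (walkerMatrix f).det = -1 := by
  simp [walkerMatrix, det_fin_three]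

theorem isUnit_walkerMatrix (f : R) : IsUnit (walkerMatrix f) := by
  rw [isUnit_iff_isUnit_det, det_walkerMatrix]
  exact isUnit_one.neg

theorem walkerMatrix_mul_walkerSkewNormalForm (f a₁ a₂ b₁ : R) :
    walkerMatrix f * walkerSkewNormalForm f a₁ a₂ b₁ =
      !![0, -a₂, -a₁; a₂, 0, -b₁ + f * a₂; a₁, b₁ - f * a₂, 0] := by
  ext i j
  fin_cases i <;> fin_cases j <;>
    simp [walkerMatrix, walkerSkewNormalForm, mul_apply, Fin.sum_univ_three, sub_eq_add_neg,
      add_comm]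

end Walker

/-- Normal form (3.8) of a `g`-skew-adjoint endomorphism with respect to the
3-dimensional Walker metric `g = [[0,0,1],[0,1,0],[1,0,f]]` (case `ε = 1`). -/
theorem walker_skew_adjoint_normal_form (f : ℝ) (φ : Matrix (Fin 3) (Fin 3) ℝ) :
    φᵀ * !![0, 0, 1; 0, 1, 0; 1, 0, f] = -(!![0, 0, 1; 0, 1, 0; 1, 0, f] * φ) ↔
    ∃ a₁ a₂ b₁ : ℝ, φ = !![a₁, b₁, f * a₁; a₂, 0, -b₁ + f * a₂; 0, -a₂, -a₁] := by
  change φᵀ * walkerMatrix f = -(walkerMatrix f * φ) ↔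
    ∃ a₁ a₂ b₁ : ℝ, φ = walkerSkewNormalForm f a₁ a₂ b₁
  rw [transpose_mul_eq_neg_mul_iff (walkerMatrix_isSymm f), transpose_eq_neg_iff_fin_three]
  constructor
  · rintro ⟨x, y, z, h⟩
    refine ⟨-y, -x, -(z + f * x), (isUnit_walkerMatrix f).mul_left_cancel ?_⟩
    rw [h, walkerMatrix_mul_walkerSkewNormalForm]
    ring_nf
  · rintro ⟨a₁, a₂, b₁, rfl⟩
    refine ⟨-a₂, -a₁, -b₁ + f * a₂, ?_⟩
    rw [walkerMatrix_mul_walkerSkewNormalForm]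
    ring_nf
end

section
/- Let f, ξ₁, ξ₂, ξ₃ be real numbers satisfying ξ₂² + f·ξ₃² + 2ξ₁ξ₃ = 1. Let g be the 3×3 real matrix with rows (0,0,1), (0,1,0), (1,0,f), let ξ = (ξ₁,ξ₂,ξ₃)ᵀ and η = g·ξ = (ξ₃, ξ₂, ξ₁ + fξ₃)ᵀ. Then a 3×3 real matrix φ satisfies both φᵀ·g = −g·φ and φ² = I₃ − ξ·ηᵀ (i.e. (φ²)ᵢⱼ = δᵢⱼ − ξᵢηⱼ) if and only if φ = A or φ = −A, where A is the matrix with rows (−ξ₂, ξ₁ + fξ₃, −f·ξ₂), (ξ₃, 0, −ξ₁), (0, −ξ₃, ξ₂). (Theorem 3.1, case ε = 1: existence and pointwise classification of almost paracontact metric structures on a 3-dimensional Walker manifold.) -/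
/-!
The condition `φᵀ g = -g φ` says that `g φ` is skew-symmetric, so the admissible `φ` form a
three-dimensional space, parametrised as `walkerPhi f u` (`u ∈ ℝ³`) in such a way that `A` is
`walkerPhi f ξ` and `-A` is `walkerPhi f (-ξ)`. On this space `φ² = (uᵀ g u) I - u (g u)ᵀ`.
Comparing with `I - ξ (g ξ)ᵀ`, the traces force `uᵀ g u = 1`; cancelling the invertible `gᵀ`
then leaves `u uᵀ = ξ ξᵀ`, that is `u = ±ξ`.
-/

open Matrix

section VecMulVec

variable {n K : Type*} [Fintype n] [CommRing K] [IsDomain K]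

theorem vecMulVec_self_eq_vecMulVec_self_iff {u v : n → K} :
    vecMulVec u u = vecMulVec v v ↔ u = v ∨ u = -v := by
  refine ⟨fun h => ?_, ?_⟩
  · have h' (i j : n) : u i * u j = v i * v j := congrFun₂ h i j
    by_cases hv : v = 0
    · subst hv
      left; ext i; simpa using h' i i
    obtain ⟨k, hk⟩ := Function.ne_iff.1 hv
    rcases mul_self_eq_mul_self_iff.1 (h' k k) with huk | huk
    · left; ext j
      exact mul_left_cancel₀ hk (by rw [← h', huk])
    · right; ext j
      refine mul_left_cancel₀ hk ?_
      rw [Pi.neg_apply]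
      linear_combination u j * huk - h' k j
  · rintro (rfl | rfl) <;> simp [neg_vecMulVec, vecMulVec_neg]

theorem smul_one_sub_vecMulVec_mulVec_eq_iff [DecidableEq n] [CharZero K]
    (hn : 1 < Fintype.card n) {g : Matrix n n K} (hg : IsUnit g) {u v : n → K}
    (hv : v ⬝ᵥ (g *ᵥ v) = 1) :
    (u ⬝ᵥ (g *ᵥ u)) • (1 : Matrix n n K) - vecMulVec u (g *ᵥ u) = 1 - vecMulVec v (g *ᵥ v) ↔
      u = v ∨ u = -v := by
  have hvv (w : n → K) : vecMulVec w (g *ᵥ w) = vecMulVec w w * gᵀ := by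
    rw [vecMulVec_mul, vecMul_transpose]
  refine ⟨fun h => ?_, ?_⟩
  · have hu : u ⬝ᵥ (g *ᵥ u) = 1 := by
      have htr := congrArg trace h
      simp only [trace_sub, trace_smul, trace_one, trace_vecMulVec, hv, smul_eq_mul] at htr
      have hn' : (Fintype.card n : K) - 1 ≠ 0 := by
        rw [sub_ne_zero]; exact_mod_cast hn.ne'
      exact mul_left_cancel₀ hn' (by linear_combination htr)
    rw [hu, one_smul, sub_right_inj, hvv, hvv] at h
    exact vecMulVec_self_eq_vecMulVec_self_iff.1 (((isUnit_transpose g).2 hg).mul_right_cancel h)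
  · rintro (rfl | rfl) <;> simp [hv, mulVec_neg]

end VecMulVec

def walkerMetric (f : ℝ) : Matrix (Fin 3) (Fin 3) ℝ := !![0, 0, 1; 0, 1, 0; 1, 0, f]

def walkerPhi (f : ℝ) (u : Fin 3 → ℝ) : Matrix (Fin 3) (Fin 3) ℝ :=
  !![-u 1, u 0 + f * u 2, -(f * u 1); u 2, 0, -u 0; 0, -u 2, u 1]

theorem isUnit_walkerMetric (f : ℝ) : IsUnit (walkerMetric f) := by
  rw [isUnit_iff_isUnit_det, det_fin_three]
  simp [walkerMetric]

theorem walkerMetric_mulVec (f a b c : ℝ) :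
    walkerMetric f *ᵥ ![a, b, c] = ![c, b, a + f * c] := by
  ext i; fin_cases i <;> simp [walkerMetric, mul_comm]

theorem walkerPhi_neg (f : ℝ) (u : Fin 3 → ℝ) : walkerPhi f (-u) = -walkerPhi f u := by
  ext i j; fin_cases i <;> fin_cases j <;> simp [walkerPhi]; ring

theorem walkerPhi_mul_self (f : ℝ) (u : Fin 3 → ℝ) :
    walkerPhi f u * walkerPhi f u =
      (u ⬝ᵥ (walkerMetric f *ᵥ u)) • 1 - vecMulVec u (walkerMetric f *ᵥ u) := by
  ext i j
  fin_cases i <;> fin_cases j <;>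
    simp [walkerPhi, walkerMetric, mul_apply, Fin.sum_univ_three, mulVec, dotProduct] <;> ring

theorem transpose_mul_walkerMetric_eq_neg_iff (f : ℝ) (φ : Matrix (Fin 3) (Fin 3) ℝ) :
    φᵀ * walkerMetric f = -(walkerMetric f * φ) ↔ ∃ u, φ = walkerPhi f u := by
  refine ⟨fun h => ⟨![-φ 1 2, -φ 0 0, φ 1 0], ?_⟩, ?_⟩
  · have e (i j : Fin 3) := congrFun₂ h i j
    have e00 := e 0 0; have e10 := e 1 0; have e11 := e 1 1
    have e20 := e 2 0; have e21 := e 2 1; have e22 := e 2 2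
    simp [walkerMetric, mul_apply, vecMul, dotProduct, Fin.sum_univ_three]
      at e00 e10 e11 e20 e21 e22
    have h20 : φ 2 0 = 0 := by linarith
    have h21 : φ 2 1 = -φ 1 0 := by linarith
    have h22 : φ 2 2 = -φ 0 0 := by linear_combination e20 - f * h20
    rw [h21] at e21
    rw [h22] at e22
    ext i j
    fin_cases i <;> fin_cases j <;> simp [walkerPhi] <;> linarith
  · rintro ⟨u, rfl⟩
    ext i j
    fin_cases i <;> fin_cases j <;>
      simp [walkerPhi, walkerMetric, mul_apply, Fin.sum_univ_three] <;> ring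

theorem walkerPhi_mul_self_eq_iff {f : ℝ} {ξ : Fin 3 → ℝ}
    (hξ : ξ ⬝ᵥ (walkerMetric f *ᵥ ξ) = 1) (u : Fin 3 → ℝ) :
    walkerPhi f u * walkerPhi f u = 1 - vecMulVec ξ (walkerMetric f *ᵥ ξ) ↔ u = ξ ∨ u = -ξ := by
  rw [walkerPhi_mul_self]
  exact smul_one_sub_vecMulVec_mulVec_eq_iff (by simp) (isUnit_walkerMetric f) hξ

/-- Theorem 3.1, case `ε = 1`: with `g = [[0,0,1],[0,1,0],[1,0,f]]`, `ξ = (ξ₁,ξ₂,ξ₃)`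
satisfying `ξ₂² + fξ₃² + 2ξ₁ξ₃ = 1` and `η = gξ = (ξ₃, ξ₂, ξ₁ + fξ₃)`, a matrix `φ`
satisfies `φᵀg = -gφ` and `φ² = I - ξηᵀ` iff `φ = ±A` where
`A = [[-ξ₂, ξ₁+fξ₃, -fξ₂],[ξ₃,0,-ξ₁],[0,-ξ₃,ξ₂]]`. -/
theorem walker_apcm_structures (f ξ₁ ξ₂ ξ₃ : ℝ)
    (hconstr : ξ₂ ^ 2 + f * ξ₃ ^ 2 + 2 * ξ₁ * ξ₃ = 1)
    (φ : Matrix (Fin 3) (Fin 3) ℝ) :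
    (φᵀ * !![0, 0, 1; 0, 1, 0; 1, 0, f] = -(!![0, 0, 1; 0, 1, 0; 1, 0, f] * φ) ∧
      φ * φ = 1 - Matrix.vecMulVec ![ξ₁, ξ₂, ξ₃] ![ξ₃, ξ₂, ξ₁ + f * ξ₃]) ↔
    (φ = !![-ξ₂, ξ₁ + f * ξ₃, -(f * ξ₂); ξ₃, 0, -ξ₁; 0, -ξ₃, ξ₂] ∨
      φ = -(!![-ξ₂, ξ₁ + f * ξ₃, -(f * ξ₂); ξ₃, 0, -ξ₁; 0, -ξ₃, ξ₂])) := by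
  have hη := walkerMetric_mulVec f ξ₁ ξ₂ ξ₃
  have hξ : ![ξ₁, ξ₂, ξ₃] ⬝ᵥ (walkerMetric f *ᵥ ![ξ₁, ξ₂, ξ₃]) = 1 := by
    rw [hη]
    simp [dotProduct, Fin.sum_univ_three]
    linear_combination hconstr
  change φᵀ * walkerMetric f = -(walkerMetric f * φ) ∧ _ ↔
    φ = walkerPhi f ![ξ₁, ξ₂, ξ₃] ∨ φ = -walkerPhi f ![ξ₁, ξ₂, ξ₃]
  rw [← hη, transpose_mul_walkerMetric_eq_neg_iff, ← walkerPhi_neg]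
  constructor
  · rintro ⟨⟨u, rfl⟩, h⟩
    rcases (walkerPhi_mul_self_eq_iff hξ u).1 h with rfl | rfl
    exacts [Or.inl rfl, Or.inr rfl]
  · rintro (rfl | rfl) <;> exact ⟨⟨_, rfl⟩, (walkerPhi_mul_self_eq_iff hξ _).2 (by simp)⟩
end

section
/- There do not exist smooth functions ξ₁, ξ₂, ξ₃, f : ℝ³ → ℝ satisfying ξ₂² + fξ₃² + 2ξ₁ξ₃ = 1 together with ∇_{∂x}ξ = φ∂x, ∇_{∂y}ξ = φ∂y and ∇_{∂z}ξ = φ∂z everywhere; explicitly, the system (ξ₁)_x + (1/2)ξ₃f_x = −ξ₂, (ξ₂)_x = ξ₃, (ξ₃)_x = 0, (ξ₁)_y + (1/2)ξ₃f_y = ξ₁ + fξ₃, (ξ₂)_y = 0, (ξ₃)_y = −ξ₃, (ξ₁)_z + (1/2)ξ₁f_x + (1/2)ξ₂f_y + (1/2)ξ₃(f f_x + f_z) = −fξ₂, (ξ₂)_z − (1/2)ξ₃f_y = −ξ₁, (ξ₃)_z − (1/2)ξ₃f_x = ξ₂ has no smooth solution on ℝ³ with ξ₂² + fξ₃² + 2ξ₁ξ₃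 = 1. Since a 3-dimensional para-Sasakian (equivalently K-paracontact metric) structure satisfies ∇_Xξ = φX for all X, almost paracontact metric 3-dimensional Walker manifolds are never para-Sasakian (Theorem 4.1). -/
open Real

/-- Points of the Walker manifold `M = ℝ³` with coordinates `(x,y,z)`. -/
abbrev Pt : Type := ℝ × ℝ × ℝ

/-- Vector fields on `ℝ³`, given by their components in the frame `∂x, ∂y, ∂z`. -/
abbrev VF : Type := Pt → Pt

/-- Partial derivative ∂/∂x. -/
noncomputable def pdx (F : Pt → ℝ) (p : Pt) : ℝ := fderiv ℝ F p ((1:ℝ), (0:ℝ), (0:ℝ))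

/-- Partial derivative ∂/∂y. -/
noncomputable def pdy (F : Pt → ℝ) (p : Pt) : ℝ := fderiv ℝ F p ((0:ℝ), (1:ℝ), (0:ℝ))

/-- Partial derivative ∂/∂z. -/
noncomputable def pdz (F : Pt → ℝ) (p : Pt) : ℝ := fderiv ℝ F p ((0:ℝ), (0:ℝ), (1:ℝ))

/-- Directional derivative of a scalar function along a vector field. -/
noncomputable def dd (X : VF) (F : Pt → ℝ) (p : Pt) : ℝ := fderiv ℝ F p (X p)

/-- Components of a tangent vector. -/
def c1 (v : Pt) : ℝ := v.1
def c2 (v : Pt) : ℝ := v.2.1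
def c3 (v : Pt) : ℝ := v.2.2

/-- The coordinate vector fields `∂x, ∂y, ∂z`. -/
noncomputable def E : Fin 3 → VF :=
  ![fun _ => ((1:ℝ), (0:ℝ), (0:ℝ)), fun _ => ((0:ℝ), (1:ℝ), (0:ℝ)),
    fun _ => ((0:ℝ), (0:ℝ), (1:ℝ))]

/-- The Walker metric with `ε = 1`: `g(∂x,∂z) = g(∂z,∂x) = 1`, `g(∂y,∂y) = 1`,
`g(∂z,∂z) = f`, all other components zero. -/
noncomputable def gm (f : Pt → ℝ) (X Y : VF) (p : Pt) : ℝ :=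
  c1 (X p) * c3 (Y p) + c3 (X p) * c1 (Y p) + c2 (X p) * c2 (Y p)
    + f p * c3 (X p) * c3 (Y p)

/-- The Levi-Civita connection of the Walker metric:
`∇_{∂x}∂z = ∇_{∂z}∂x = (1/2) f_x ∂x`, `∇_{∂y}∂z = ∇_{∂z}∂y = (1/2) f_y ∂x`,
`∇_{∂z}∂z = (1/2)(f f_x + f_z) ∂x - (1/2) f_y ∂y - (1/2) f_x ∂z`, all other covariant
derivatives of coordinate fields zero, extended by `C^∞`-linearity below and the
Leibniz rule above. -/
noncomputable def cov (f : Pt → ℝ) (X Y : VF) : VF := fun p =>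
  ( dd X (fun q => c1 (Y q)) p
      + (1/2) * pdx f p * (c1 (X p) * c3 (Y p) + c3 (X p) * c1 (Y p))
      + (1/2) * pdy f p * (c2 (X p) * c3 (Y p) + c3 (X p) * c2 (Y p))
      + (1/2) * (f p * pdx f p + pdz f p) * (c3 (X p) * c3 (Y p)),
    dd X (fun q => c2 (Y q)) p - (1/2) * pdy f p * (c3 (X p) * c3 (Y p)),
    dd X (fun q => c3 (Y q)) p - (1/2) * pdx f p * (c3 (X p) * c3 (Y p)) )

/-- Lie bracket of vector fields on `ℝ³`. -/
noncomputable def brk (X Y : VF) : VF := fun p =>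
  ( dd X (fun q => c1 (Y q)) p - dd Y (fun q => c1 (X q)) p,
    dd X (fun q => c2 (Y q)) p - dd Y (fun q => c2 (X q)) p,
    dd X (fun q => c3 (Y q)) p - dd Y (fun q => c3 (X q)) p )

/-- The `(1,1)`-tensor `φ` of the almost paracontact metric Walker structure:
`φ∂x = -ξ₂∂x + ξ₃∂y`, `φ∂y = (ξ₁ + fξ₃)∂x - ξ₃∂z`, `φ∂z = -fξ₂∂x - ξ₁∂y + ξ₂∂z`. -/
noncomputable def phiV (f ξ₁ ξ₂ ξ₃ : Pt → ℝ) (X : VF) : VF := fun p =>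
  ( -ξ₂ p * c1 (X p) + (ξ₁ p + f p * ξ₃ p) * c2 (X p) - f p * ξ₂ p * c3 (X p),
    ξ₃ p * c1 (X p) - ξ₁ p * c3 (X p),
    -ξ₃ p * c2 (X p) + ξ₂ p * c3 (X p) )

/-- The 1-form `η = ξ₃ dx + ξ₂ dy + (ξ₁ + fξ₃) dz`. -/
noncomputable def etaV (f ξ₁ ξ₂ ξ₃ : Pt → ℝ) (X : VF) (p : Pt) : ℝ :=
  ξ₃ p * c1 (X p) + ξ₂ p * c2 (X p) + (ξ₁ p + f p * ξ₃ p) * c3 (X p)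

/-- The structure tensor `F(X,Y,Z) = g((∇_X φ)Y, Z)`, `(∇_X φ)Y = ∇_X(φY) - φ(∇_X Y)`. -/
noncomputable def Ften (f ξ₁ ξ₂ ξ₃ : Pt → ℝ) (X Y Z : VF) (p : Pt) : ℝ :=
  gm f (fun q => cov f X (phiV f ξ₁ ξ₂ ξ₃ Y) q - phiV f ξ₁ ξ₂ ξ₃ (cov f X Y) q) Z p

/-- The fundamental 2-form `Φ(X,Y) = g(φX, Y)`. -/
noncomputable def Phi2 (f ξ₁ ξ₂ ξ₃ : Pt → ℝ) (X Y : VF) : Pt → ℝ :=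
  gm f (phiV f ξ₁ ξ₂ ξ₃ X) Y

/-- `dη(∂i,∂j) = (1/2)(∂i(η(∂j)) - ∂j(η(∂i)))` on coordinate fields. -/
noncomputable def deta (f ξ₁ ξ₂ ξ₃ : Pt → ℝ) (i j : Fin 3) (p : Pt) : ℝ :=
  (1/2) * (dd (E i) (etaV f ξ₁ ξ₂ ξ₃ (E j)) p - dd (E j) (etaV f ξ₁ ξ₂ ξ₃ (E i)) p)

/-- `dη(X,Y) = (1/2)(X(η(Y)) - Y(η(X)) - η([X,Y]))` on general vector fields. -/
noncomputable def detaB (f ξ₁ ξ₂ ξ₃ : Pt → ℝ) (X Y : VF) (p : Pt) : ℝ :=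
  (1/2) * (dd X (etaV f ξ₁ ξ₂ ξ₃ Y) p - dd Y (etaV f ξ₁ ξ₂ ξ₃ X) p
    - etaV f ξ₁ ξ₂ ξ₃ (brk X Y) p)

/-- The Nijenhuis tensor `N(X,Y) = φ²[X,Y] + [φX,φY] - φ[φX,Y] - φ[X,φY]`. -/
noncomputable def nij (f ξ₁ ξ₂ ξ₃ : Pt → ℝ) (X Y : VF) : VF := fun p =>
  phiV f ξ₁ ξ₂ ξ₃ (phiV f ξ₁ ξ₂ ξ₃ (brk X Y)) p
    + brk (phiV f ξ₁ ξ₂ ξ₃ X) (phiV f ξ₁ ξ₂ ξ₃ Y) p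
    - phiV f ξ₁ ξ₂ ξ₃ (brk (phiV f ξ₁ ξ₂ ξ₃ X) Y) p
    - phiV f ξ₁ ξ₂ ξ₃ (brk X (phiV f ξ₁ ξ₂ ξ₃ Y)) p

/-- The curvature tensor, with the paper's sign convention
`R(X,Y)Z = ∇_{[X,Y]}Z - ∇_X∇_Y Z + ∇_Y∇_X Z`. -/
noncomputable def Rop (f : Pt → ℝ) (X Y Z : VF) : VF := fun p =>
  cov f (brk X Y) Z p - cov f X (cov f Y Z) p + cov f Y (cov f X Z) p

/-- Second partial derivatives of `f`. -/
noncomputable def fxx (f : Pt → ℝ) : Pt → ℝ := pdx (pdx f)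
noncomputable def fxy (f : Pt → ℝ) : Pt → ℝ := pdy (pdx f)
noncomputable def fyy (f : Pt → ℝ) : Pt → ℝ := pdy (pdy f)

/-- The Ricci tensor of the Walker metric: `ρ(∂x,∂z) = ρ(∂z,∂x) = (1/2) f_xx`,
`ρ(∂y,∂z) = ρ(∂z,∂y) = (1/2) f_xy`, `ρ(∂z,∂z) = (1/2)(f f_xx - f_yy)`, all other
components zero, extended tensorially. -/
noncomputable def rhoT (f : Pt → ℝ) (X Y : VF) (p : Pt) : ℝ :=
  (1/2) * fxx f p * (c1 (X p) * c3 (Y p) + c3 (X p) * c1 (Y p))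
    + (1/2) * fxy f p * (c2 (X p) * c3 (Y p) + c3 (X p) * c2 (Y p))
    + (1/2) * (f p * fxx f p - fyy f p) * (c3 (X p) * c3 (Y p))

/-- The Ricci operator: `Q∂x = (1/2)f_xx ∂x`, `Q∂y = (1/2)f_xy ∂x`,
`Q∂z = -(1/2)f_yy ∂x + (1/2)f_xy ∂y + (1/2)f_xx ∂z`. -/
noncomputable def Qop (f : Pt → ℝ) (X : VF) : VF := fun p =>
  ( (1/2) * fxx f p * c1 (X p) + (1/2) * fxy f p * c2 (X p) - (1/2) * fyy f p * c3 (X p),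
    (1/2) * fxy f p * c3 (X p),
    (1/2) * fxx f p * c3 (X p) )

/-- `dΦ(∂x,∂y,∂z) = ∂x(Φ(∂y,∂z)) - ∂y(Φ(∂x,∂z)) + ∂z(Φ(∂x,∂y))`. -/
noncomputable def dPhi (f ξ₁ ξ₂ ξ₃ : Pt → ℝ) (p : Pt) : ℝ :=
  pdx (Phi2 f ξ₁ ξ₂ ξ₃ (E 1) (E 2)) p - pdy (Phi2 f ξ₁ ξ₂ ξ₃ (E 0) (E 2)) p
    + pdz (Phi2 f ξ₁ ξ₂ ξ₃ (E 0) (E 1)) p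

/-- `(η∧Φ)(∂x,∂y,∂z) = η(∂x)Φ(∂y,∂z) - η(∂y)Φ(∂x,∂z) + η(∂z)Φ(∂x,∂y)`. -/
noncomputable def etaWedgePhi (f ξ₁ ξ₂ ξ₃ : Pt → ℝ) (p : Pt) : ℝ :=
  etaV f ξ₁ ξ₂ ξ₃ (E 0) p * Phi2 f ξ₁ ξ₂ ξ₃ (E 1) (E 2) p
    - etaV f ξ₁ ξ₂ ξ₃ (E 1) p * Phi2 f ξ₁ ξ₂ ξ₃ (E 0) (E 2) p
    + etaV f ξ₁ ξ₂ ξ₃ (E 2) p * Phi2 f ξ₁ ξ₂ ξ₃ (E 0) (E 1) p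

/-- The constant function `0`. -/
noncomputable def zeroF : Pt → ℝ := fun _ => 0
/-- The constant function `1`. -/
noncomputable def oneF : Pt → ℝ := fun _ => 1
/-- The constant function `-1`. -/
noncomputable def negOneF : Pt → ℝ := fun _ => -1

/-! The equations `(ξ₂)_x = ξ₃`, `(ξ₂)_y = 0` and `(ξ₃)_y = -ξ₃` are incompatible with the
symmetry of the mixed partials of `ξ₂` unless `ξ₃ = -(ξ₂)_{xy} = 0`. Then the equation
`(ξ₃)_z - ½ ξ₃ f_x = ξ₂` forces `ξ₂ = 0`, and the normalization
`ξ₂² + f ξ₃² + 2 ξ₁ ξ₃ = 1` fails. -/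

theorem fderiv_apply_comm_of_contDiff {E F : Type*} [NormedAddCommGroup E] [NormedSpace ℝ E]
    [NormedAddCommGroup F] [NormedSpace ℝ F] {u : E → F} (hu : ContDiff ℝ 2 u) (p v w : E) :
    fderiv ℝ (fun q => fderiv ℝ u q v) p w = fderiv ℝ (fun q => fderiv ℝ u q w) p v := by
  have hdiff : DifferentiableAt ℝ (fderiv ℝ u) p :=
    (hu.fderiv_right (m := 1) le_rfl).differentiable one_ne_zero p
  have happly (v w : E) :
      fderiv ℝ (fun q => fderiv ℝ u q v) p w = fderiv ℝ (fderiv ℝ u) p w v := by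
    rw [fderiv_clm_apply hdiff (differentiableAt_const v)]
    simp
  rw [happly, happly]
  exact (hu.contDiffAt.isSymmSndFDerivAt (by simp)).eq w v

theorem pdy_pdx_comm {F : Pt → ℝ} (hF : ContDiff ℝ 2 F) : pdy (pdx F) = pdx (pdy F) :=
  funext fun p => fderiv_apply_comm_of_contDiff hF p _ _

@[simp]
theorem pdx_zero : pdx 0 = 0 := by
  ext p
  simp [pdx]

@[simp]
theorem pdz_zero : pdz 0 = 0 := by
  ext p
  simp [pdz]

theorem eq_zero_of_pdx_eq_of_pdy_eq_neg {u v : Pt → ℝ} (hu : ContDiff ℝ 2 u)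
    (hux : pdx u = v) (huy : pdy u = 0) (hvy : pdy v = -v) : v = 0 := by
  calc v = -pdy (pdx u) := by rw [hux, hvy, neg_neg]
    _ = -pdx (pdy u) := by rw [pdy_pdx_comm hu]
    _ = 0 := by rw [huy, pdx_zero, neg_zero]

/-- Theorem 4.1: almost paracontact metric 3-dimensional Walker manifolds are never
para-Sasakian; the system `∇_{∂x}ξ = φ∂x`, `∇_{∂y}ξ = φ∂y`, `∇_{∂z}ξ = φ∂z` has no
smooth solution. -/
theorem never_paraSasakian :
    ¬ ∃ ξ₁ ξ₂ ξ₃ f : Pt → ℝ,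
      ContDiff ℝ (⊤ : ℕ∞) ξ₁ ∧ ContDiff ℝ (⊤ : ℕ∞) ξ₂ ∧ ContDiff ℝ (⊤ : ℕ∞) ξ₃ ∧
      ContDiff ℝ (⊤ : ℕ∞) f ∧
      (∀ p : Pt, ξ₂ p ^ 2 + f p * ξ₃ p ^ 2 + 2 * ξ₁ p * ξ₃ p = 1) ∧
      (∀ p : Pt, pdx ξ₁ p + (1/2) * ξ₃ p * pdx f p = -ξ₂ p) ∧
      (∀ p : Pt, pdx ξ₂ p = ξ₃ p) ∧
      (∀ p : Pt, pdx ξ₃ p = 0) ∧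
      (∀ p : Pt, pdy ξ₁ p + (1/2) * ξ₃ p * pdy f p = ξ₁ p + f p * ξ₃ p) ∧
      (∀ p : Pt, pdy ξ₂ p = 0) ∧
      (∀ p : Pt, pdy ξ₃ p = -ξ₃ p) ∧
      (∀ p : Pt, pdz ξ₁ p + (1/2) * ξ₁ p * pdx f p + (1/2) * ξ₂ p * pdy f p
        + (1/2) * ξ₃ p * (f p * pdx f p + pdz f p) = -(f p * ξ₂ p)) ∧
      (∀ p : Pt, pdz ξ₂ p - (1/2) * ξ₃ p * pdy f p = -ξ₁ p) ∧
      (∀ p : Pt, pdz ξ₃ p - (1/2) * ξ₃ p * pdx f p = ξ₂ p) := by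
  rintro ⟨ξ₁, ξ₂, ξ₃, f, -, hξ₂, -, -, hnorm, -, hx₂, -, -, hy₂, hy₃, -, -, hz₃⟩
  have hξ₃ : ξ₃ = 0 :=
    eq_zero_of_pdx_eq_of_pdy_eq_neg (hξ₂.of_le (by norm_cast)) (funext hx₂) (funext hy₂)
      (funext hy₃)
  have hξ₂ (p : Pt) : ξ₂ p = 0 := by
    simpa [hξ₃] using (hz₃ p).symm
  simpa [hξ₂, hξ₃] using hnorm 0
end
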